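/- Fix z with Im z > 0, y > 0 and τ > 0. Let H_p (for each p) and H be probability measures on [0, τ] with H_p converging weakly to H, and let n = n(p) satisfy p/n → y as p → ∞. Suppose u_p and v_p lie in the upper half-plane and satisfy z = −1/u_p + (p/n) ∫ t/(1 + t u_p) dH_p(t) and z = −1/v_p + (p/(n−1)) ∫ t/(1 + t v_p) dH_p(t), suppose u_p → m̲ and v_p → m̲ where m̲ lies in the upper half-plane and satisfies z = −1/m̲ + y ∫ t/(1 + t m̲) dH(t), and suppose 1/m̲² − y ∫ t²/(1 + t m̲)² dH(t) ≠ 0. Define m_n and m_{n−1} by u_p = −(1 − p/n)/z + (p/n) m_n and v_p = −(1 − p/(n−1))/z + (p/(n−1)) m_{n−1}, and set m̲′ = ( 1/m̲² − y ∫ t²/(1 + t m̲)² dH(t) )^{-1}. Then p(m_n − m_{n−1}) → (1 + z m̲)·(m̲ + z m̲′)/(z m̲) as p → ∞. -/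

import Mathlib

/-!
With `k_w(t) = t / (1 + t w)` for `w` in the upper half-plane, the resolvent identity
`k_u - k_v = (v - u) k_u k_v` turns the difference of the two equations for `u_p` and `v_p` into
`n (u_p - v_p) (1 / (u_p v_p) - (p/n) ∫ k_{u_p} k_{v_p} dH_p) = (p/(n-1)) ∫ k_{v_p} dH_p`.
Since `w ↦ k_w` is continuous into bounded continuous functions and `H_p → H` weakly, all these
integrals converge, so `n (u_p - v_p) → y ∫ k_m̲ dH / (1/m̲² - y ∫ k_m̲² dH) = (z + 1/m̲) m̲′`.
The linear relations give `p (m_n - m_{n-1}) = n (u_p - v_p) + v_p + 1/z`.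
-/

open MeasureTheory Filter Topology UpperHalfPlane BoundedContinuousFunction

theorem MeasureTheory.ProbabilityMeasure.tendsto_integral_of_tendsto {Ω γ 𝕜 : Type*}
    [MeasurableSpace Ω] [TopologicalSpace Ω] [OpensMeasurableSpace Ω] [RCLike 𝕜] {F : Filter γ}
    {μs : γ → ProbabilityMeasure Ω} {μ : ProbabilityMeasure Ω} (hμ : Tendsto μs F (𝓝 μ))
    {fs : γ → Ω →ᵇ 𝕜} {f : Ω →ᵇ 𝕜} (hf : Tendsto fs F (𝓝 f)) :
    Tendsto (fun i => ∫ ω, fs i ω ∂(μs i : Measure Ω)) F (𝓝 (∫ ω, f ω ∂(μ : Measure Ω))) := by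
  have hfix := (ProbabilityMeasure.tendsto_iff_forall_integral_rclike_tendsto 𝕜).1 hμ f
  have hsmall : Tendsto (fun i => ∫ ω, (fs i - f) ω ∂(μs i : Measure Ω)) F (𝓝 0) := by
    refine squeeze_zero_norm (fun i => (fs i - f).norm_integral_le_norm _) ?_
    simpa only [← dist_eq_norm] using (tendsto_iff_dist_tendsto_zero.1 hf)
  rw [← zero_add (∫ ω, f ω ∂(μ : Measure Ω))]
  refine (hsmall.add hfix).congr fun i => ?_
  simp only [BoundedContinuousFunction.coe_sub, Pi.sub_apply]
  rw [integral_sub ((fs i).integrable _) (f.integrable _), sub_add_cancel]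

lemma one_add_ofReal_mul_ne_zero (w : ℍ) (t : ℝ) : 1 + t * (w : ℂ) ≠ 0 := by
  intro h
  have him : t * w.im = 0 := by simpa using congrArg Complex.im h
  rcases mul_eq_zero.1 him with rfl | him
  · simp at h
  · exact w.im_pos.ne' him

lemma norm_ofReal_div_one_add_mul_le (w : ℍ) (t : ℝ) :
    ‖(t : ℂ) / (1 + t * (w : ℂ))‖ ≤ 1 / w.im := by
  have hpos : 0 < ‖1 + t * (w : ℂ)‖ := norm_pos_iff.2 (one_add_ofReal_mul_ne_zero w t)
  rw [norm_div, Complex.norm_real, Real.norm_eq_abs, div_le_div_iff₀ hpos w.im_pos, one_mul]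
  calc |t| * w.im = |(1 + t * (w : ℂ)).im| := by simp [abs_mul, abs_of_pos w.im_pos]
    _ ≤ ‖1 + t * (w : ℂ)‖ := Complex.abs_im_le_norm _

noncomputable def stieltjesKernel (w : ℍ) : ℝ →ᵇ ℂ :=
  .ofNormedAddCommGroup (fun t => t / (1 + t * (w : ℂ)))
    (by fun_prop (disch := exact one_add_ofReal_mul_ne_zero w)) (1 / w.im)
    (norm_ofReal_div_one_add_mul_le w)

@[simp]
lemma stieltjesKernel_apply (w : ℍ) (t : ℝ) : stieltjesKernel w t = t / (1 + t * (w : ℂ)) := rfl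

lemma stieltjesKernel_sub_apply (u v : ℍ) (t : ℝ) :
    stieltjesKernel u t - stieltjesKernel v t =
      ((v : ℂ) - u) * (stieltjesKernel u t * stieltjesKernel v t) := by
  have hu := one_add_ofReal_mul_ne_zero u t
  have hv := one_add_ofReal_mul_ne_zero v t
  simp only [stieltjesKernel_apply]
  field_simp
  ring

lemma dist_stieltjesKernel_le (u v : ℍ) :
    dist (stieltjesKernel u) (stieltjesKernel v) ≤ dist (u : ℂ) v / (u.im * v.im) := by
  have := u.im_pos
  have := v.im_pos
  refine (dist_le (by positivity)).2 fun t => ?_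
  rw [dist_eq_norm, stieltjesKernel_sub_apply, norm_mul, norm_mul, norm_sub_rev, ← dist_eq_norm]
  calc dist (u : ℂ) v * (‖stieltjesKernel u t‖ * ‖stieltjesKernel v t‖)
      ≤ dist (u : ℂ) v * (1 / u.im * (1 / v.im)) := by
        gcongr <;> exact norm_ofReal_div_one_add_mul_le _ t
    _ = dist (u : ℂ) v / (u.im * v.im) := by field_simp

theorem continuous_stieltjesKernel : Continuous stieltjesKernel := by
  refine continuous_iff_continuousAt.2 fun w₀ => tendsto_iff_dist_tendsto_zero.2 ?_
  have hbound : Continuous fun w : ℍ => dist (w : ℂ) w₀ / (w.im * w₀.im) :=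
    (continuous_coe.dist continuous_const).div (continuous_im.mul continuous_const)
      fun w => (mul_pos w.im_pos w₀.im_pos).ne'
  refine squeeze_zero (fun _ => dist_nonneg) (fun w => dist_stieltjesKernel_le w w₀) ?_
  simpa using hbound.tendsto w₀

lemma integral_stieltjesKernel_sub (μ : Measure ℝ) [IsFiniteMeasure μ] (u v : ℍ) :
    ∫ t, stieltjesKernel u t ∂μ - ∫ t, stieltjesKernel v t ∂μ =
      ((v : ℂ) - u) * ∫ t, stieltjesKernel u t * stieltjesKernel v t ∂μ := by
  rw [← integral_sub ((stieltjesKernel u).integrable μ) ((stieltjesKernel v).integrable μ),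
    ← integral_const_mul]
  exact integral_congr_ae (ae_of_all _ (stieltjesKernel_sub_apply u v))

lemma sub_mul_eq_of_silverstein (μ : Measure ℝ) [IsFiniteMeasure μ] {z c d : ℂ} {u v : ℍ}
    (hu : z = -1 / u + c * ∫ t, stieltjesKernel u t ∂μ)
    (hv : z = -1 / v + d * ∫ t, stieltjesKernel v t ∂μ) :
    ((u : ℂ) - v) * (1 / (u * v) - c * ∫ t, stieltjesKernel u t * stieltjesKernel v t ∂μ) =
      (d - c) * ∫ t, stieltjesKernel v t ∂μ := by
  have hdiff := integral_stieltjesKernel_sub μ u v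
  have hinv : ((u : ℂ) - v) * (1 / (u * v)) = 1 / v - 1 / u := by
    have hu0 := u.ne_zero
    have hv0 := v.ne_zero
    field_simp
  linear_combination hinv + hv - hu - c * hdiff

theorem tendsto_mul_sub_of_silverstein {ι : Type*} {l : Filter ι}
    {μs : ι → ProbabilityMeasure ℝ} {μ : ProbabilityMeasure ℝ} (hμ : Tendsto μs l (𝓝 μ))
    {z y : ℂ} {c d N : ι → ℂ} (hc : Tendsto c l (𝓝 y)) (hd : Tendsto d l (𝓝 y))
    (hN : ∀ i, N i * (d i - c i) = d i) {U V : ι → ℍ} {M : ℍ}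
    (hU : Tendsto U l (𝓝 M)) (hV : Tendsto V l (𝓝 M))
    (hu : ∀ i, z = -1 / U i + c i * ∫ t, stieltjesKernel (U i) t ∂(μs i : Measure ℝ))
    (hv : ∀ i, z = -1 / V i + d i * ∫ t, stieltjesKernel (V i) t ∂(μs i : Measure ℝ))
    (hD : 1 / (M : ℂ) ^ 2 - y * ∫ t, stieltjesKernel M t ^ 2 ∂(μ : Measure ℝ) ≠ 0) :
    Tendsto (fun i => N i * ((U i : ℂ) - V i)) l
      (𝓝 (y * (∫ t, stieltjesKernel M t ∂(μ : Measure ℝ)) /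
        (1 / (M : ℂ) ^ 2 - y * ∫ t, stieltjesKernel M t ^ 2 ∂(μ : Measure ℝ)))) := by
  have hK := continuous_stieltjesKernel.tendsto M
  have hB := ProbabilityMeasure.tendsto_integral_of_tendsto hμ (hK.comp hV)
  have hC := ProbabilityMeasure.tendsto_integral_of_tendsto hμ ((hK.comp hU).mul (hK.comp hV))
  have hUV := ((continuous_coe.tendsto M).comp hU).mul ((continuous_coe.tendsto M).comp hV)
  simp only [Function.comp_apply, BoundedContinuousFunction.coe_mul, Pi.mul_apply] at hB hC hUV
  have hDi := (tendsto_const_nhds (x := (1 : ℂ))).div hUV (mul_ne_zero M.ne_zero M.ne_zero)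
    |>.sub (hc.mul hC)
  simp only [Pi.div_apply, ← pow_two] at hDi
  refine ((hd.mul hB).div hDi hD).congr' ?_
  filter_upwards [hDi.eventually_ne hD] with i hi
  rw [Pi.div_apply, div_eq_iff hi, mul_assoc, sub_mul_eq_of_silverstein _ (hu i) (hv i),
    ← mul_assoc, hN]

lemma tendsto_atTop_of_tendsto_div {α : Type*} {l : Filter α} {a b : α → ℝ} {y : ℝ}
    (ha : Tendsto a l atTop) (hb : ∀ i, 0 < b i) (h : Tendsto (fun i => a i / b i) l (𝓝 y)) :
    Tendsto b l atTop := by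
  have hK : 0 < |y| + 1 := by positivity
  refine tendsto_atTop_mono' l ?_ (ha.atTop_div_const hK)
  filter_upwards [h.eventually (gt_mem_nhds ((le_abs_self y).trans_lt (lt_add_one _)))] with i hi
  rw [div_lt_iff₀ (hb i)] at hi
  rw [div_le_iff₀ hK]
  linarith

lemma tendsto_div_sub_one_of_tendsto_div {α : Type*} {l : Filter α} {a b : α → ℝ} {y : ℝ}
    (hb : Tendsto b l atTop) (h : Tendsto (fun i => a i / b i) l (𝓝 y)) :
    Tendsto (fun i => a i / (b i - 1)) l (𝓝 y) := by
  have hinv : Tendsto (fun i => (b i - 1)⁻¹) l (𝓝 0) :=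
    tendsto_inv_atTop_zero.comp <| by
      simpa [sub_eq_add_neg] using tendsto_atTop_add_const_right _ (-1) hb
  have hsum := h.add (h.mul hinv)
  rw [mul_zero, add_zero] at hsum
  refine hsum.congr' ?_
  filter_upwards [hb.eventually_gt_atTop 1] with i hi
  have hb0 : b i ≠ 0 := by positivity
  have hb1 : b i - 1 ≠ 0 := sub_ne_zero.2 hi.ne'
  field_simp
  ring

lemma mul_sub_eq_of_eq_companion {z P N u v a b : ℂ} (hz : z ≠ 0) (hN : N ≠ 0) (hN1 : N - 1 ≠ 0)
    (hu : u = -(1 - P / N) / z + P / N * a) (hv : v = -(1 - P / (N - 1)) / z + P / (N - 1) * b) :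
    P * (a - b) = N * (u - v) + v + 1 / z := by
  subst hu hv
  field_simp
  ring

lemma mul_div_sub_one_sub_div {P N : ℂ} (hN : N ≠ 0) (hN1 : N - 1 ≠ 0) :
    N * (P / (N - 1) - P / N) = P / (N - 1) := by
  field_simp
  ring

theorem stieltjes_transform_difference_limit_general (z : ℂ) (hz : 0 < z.im)
    (y : ℝ)
    (Hp : ℕ → Measure ℝ) (H : Measure ℝ)
    [∀ p, IsProbabilityMeasure (Hp p)] [IsProbabilityMeasure H]
    (hweak : ∀ g : BoundedContinuousFunction ℝ ℝ,
      Tendsto (fun p => ∫ t, g t ∂(Hp p)) atTop (nhds (∫ t, g t ∂H)))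
    (n : ℕ → ℕ) (hn : ∀ p, 2 ≤ n p)
    (hratio : Tendsto (fun p : ℕ => (p : ℝ) / (n p : ℝ)) atTop (nhds y))
    (u v : ℕ → ℂ) (hu_im : ∀ p, 0 < (u p).im) (hv_im : ∀ p, 0 < (v p).im)
    (hu : ∀ p, z = -1 / u p +
      ((p : ℂ) / (n p : ℂ)) * ∫ (t : ℝ), (t : ℂ) / (1 + (t : ℂ) * u p) ∂(Hp p))
    (hv : ∀ p, z = -1 / v p +
      ((p : ℂ) / ((n p : ℂ) - 1)) * ∫ (t : ℝ), (t : ℂ) / (1 + (t : ℂ) * v p) ∂(Hp p))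
    (m : ℂ) (hm_im : 0 < m.im)
    (hulim : Tendsto u atTop (nhds m)) (hvlim : Tendsto v atTop (nhds m))
    (hm : z = -1 / m + (y : ℂ) * ∫ (t : ℝ), (t : ℂ) / (1 + (t : ℂ) * m) ∂H)
    (hden : 1 / m ^ 2 -
      (y : ℂ) * (∫ (t : ℝ), (t : ℂ) ^ 2 / (1 + (t : ℂ) * m) ^ 2 ∂H) ≠ 0)
    (mn mn1 : ℕ → ℂ)
    (hmn : ∀ p, u p = -(1 - (p : ℂ) / (n p : ℂ)) / z + ((p : ℂ) / (n p : ℂ)) * mn p)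
    (hmn1 : ∀ p, v p = -(1 - (p : ℂ) / ((n p : ℂ) - 1)) / z +
      ((p : ℂ) / ((n p : ℂ) - 1)) * mn1 p)
    (m' : ℂ)
    (hm' : m' = (1 / m ^ 2 -
      (y : ℂ) * ∫ (t : ℝ), (t : ℂ) ^ 2 / (1 + (t : ℂ) * m) ^ 2 ∂H)⁻¹) :
    Tendsto (fun p : ℕ => (p : ℂ) * (mn p - mn1 p)) atTop
      (nhds ((1 + z * m) * (m + z * m') / (z * m))) := by
  have hz0 : z ≠ 0 := UpperHalfPlane.ne_zero ⟨z, hz⟩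
  have hm0 : m ≠ 0 := UpperHalfPlane.ne_zero ⟨m, hm_im⟩
  have hN0 (p : ℕ) : (n p : ℂ) ≠ 0 := Nat.cast_ne_zero.2 (by have := hn p; omega)
  have hN1 (p : ℕ) : (n p : ℂ) - 1 ≠ 0 :=
    sub_ne_zero.2 (by exact_mod_cast (by have := hn p; omega : n p ≠ 1))
  have hnR : Tendsto (fun p => (n p : ℝ)) atTop atTop :=
    tendsto_atTop_of_tendsto_div tendsto_natCast_atTop_atTop
      (fun p => by have := hn p; positivity) hratio
  have hc : Tendsto (fun p : ℕ => (p : ℂ) / n p) atTop (𝓝 y) := by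
    simpa [Function.comp_def] using (Complex.continuous_ofReal.tendsto y).comp hratio
  have hd : Tendsto (fun p : ℕ => (p : ℂ) / ((n p : ℂ) - 1)) atTop (𝓝 y) := by
    simpa [Function.comp_def] using (Complex.continuous_ofReal.tendsto y).comp
      (tendsto_div_sub_one_of_tendsto_div hnR hratio)
  have hμ := (ProbabilityMeasure.tendsto_iff_forall_integral_tendsto
    (μs := fun p => ⟨Hp p, inferInstance⟩) (μ := ⟨H, inferInstance⟩)).2 hweak
  have hlim := tendsto_mul_sub_of_silverstein hμ hc hd
    (fun p => mul_div_sub_one_sub_div (hN0 p) (hN1 p))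
    (U := fun p => ⟨u p, hu_im p⟩) (V := fun p => ⟨v p, hv_im p⟩) (M := ⟨m, hm_im⟩)
    (isEmbedding_coe.tendsto_nhds_iff.2 hulim) (isEmbedding_coe.tendsto_nhds_iff.2 hvlim)
    hu hv (by
      convert hden using 3
      simp only [ProbabilityMeasure.coe_mk, stieltjesKernel_apply, div_pow])
  rw [funext fun p => mul_sub_eq_of_eq_companion hz0 (hN0 p) (hN1 p) (hmn p) (hmn1 p)]
  convert (hlim.add hvlim).add (tendsto_const_nhds (x := 1 / z)) using 2
  simp only [ProbabilityMeasure.coe_mk, stieltjesKernel_apply, div_pow]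
  rw [div_eq_mul_inv _ (_ - _), ← hm', show (y : ℂ) * _ = z + 1 / m by linear_combination -hm]
  field_simp
  ring

/-- Lemma 4.1: `p (m_n − m_{n−1}) → (1 + z m̲)(m̲ + z m̲′)/(z m̲)`, where `m_n`, `m_{n−1}`
are the Stieltjes transforms corresponding to ratios `p/n` and `p/(n−1)` and `m̲′` is
the explicit value of the derivative of the limiting companion Stieltjes transform. -/
theorem stieltjes_transform_difference_limit (z : ℂ) (hz : 0 < z.im)
    (y τ : ℝ) (hy : 0 < y) (hτ : 0 < τ)
    (Hp : ℕ → Measure ℝ) (H : Measure ℝ)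
    [∀ p, IsProbabilityMeasure (Hp p)] [IsProbabilityMeasure H]
    (hHpsupp : ∀ p, Hp p (Set.Icc 0 τ)ᶜ = 0) (hHsupp : H (Set.Icc 0 τ)ᶜ = 0)
    (hweak : ∀ g : BoundedContinuousFunction ℝ ℝ,
      Tendsto (fun p => ∫ t, g t ∂(Hp p)) atTop (nhds (∫ t, g t ∂H)))
    (n : ℕ → ℕ) (hn : ∀ p, 2 ≤ n p)
    (hratio : Tendsto (fun p : ℕ => (p : ℝ) / (n p : ℝ)) atTop (nhds y))
    (u v : ℕ → ℂ) (hu_im : ∀ p, 0 < (u p).im) (hv_im : ∀ p, 0 < (v p).im)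
    (hu : ∀ p, z = -1 / u p +
      ((p : ℂ) / (n p : ℂ)) * ∫ (t : ℝ), (t : ℂ) / (1 + (t : ℂ) * u p) ∂(Hp p))
    (hv : ∀ p, z = -1 / v p +
      ((p : ℂ) / ((n p : ℂ) - 1)) * ∫ (t : ℝ), (t : ℂ) / (1 + (t : ℂ) * v p) ∂(Hp p))
    (m : ℂ) (hm_im : 0 < m.im)
    (hulim : Tendsto u atTop (nhds m)) (hvlim : Tendsto v atTop (nhds m))
    (hm : z = -1 / m + (y : ℂ) * ∫ (t : ℝ), (t : ℂ) / (1 + (t : ℂ) * m) ∂H)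
    (hden : 1 / m ^ 2 -
      (y : ℂ) * (∫ (t : ℝ), (t : ℂ) ^ 2 / (1 + (t : ℂ) * m) ^ 2 ∂H) ≠ 0)
    (mn mn1 : ℕ → ℂ)
    (hmn : ∀ p, u p = -(1 - (p : ℂ) / (n p : ℂ)) / z + ((p : ℂ) / (n p : ℂ)) * mn p)
    (hmn1 : ∀ p, v p = -(1 - (p : ℂ) / ((n p : ℂ) - 1)) / z +
      ((p : ℂ) / ((n p : ℂ) - 1)) * mn1 p)
    (m' : ℂ)
    (hm' : m' = (1 / m ^ 2 -
      (y : ℂ) * ∫ (t : ℝ), (t : ℂ) ^ 2 / (1 + (t : ℂ) * m) ^ 2 ∂H)⁻¹) :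
    Tendsto (fun p : ℕ => (p : ℂ) * (mn p - mn1 p)) atTop
      (nhds ((1 + z * m) * (m + z * m') / (z * m))) :=
  stieltjes_transform_difference_limit_general z hz y Hp H hweak n hn hratio u v hu_im hv_im hu hv m
    hm_im hulim hvlim hm hden mn mn1 hmn hmn1 m' hm'
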